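/- If X is a compact Hausdorff space and κ an infinite cardinal such that every point of X has character at most κ, then X × 2^κ is pin homogeneous. -/

import Mathlib

/-!
If `x = y`, the points `(x, s)` and `(y, t)` differ by a homeomorphism of the Cantor cube.
If `x ≠ y`, the character bound gives open neighbourhoods `U α ∋ x`, `V α ∋ y` indexed by `ι`, with
every `U α` disjoint from every `V β`, whose closures intersect in `{x}` and `{y}` respectively.
Writing `[A, a]_α` for `A × {ε | ε α = a}`, let `R` be the set of pairs `(z, w)` such that for
every `α`, `z ∈ [U α, s α]_α` forces `w ∈ [closure (V α), t α]_α` and `z ∈ [V α, t α]_α` forces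
`w ∈ [closure (U α), s α]_α`, and symmetrize. Then `R` is closed, relates `(x, s)` to `(y, t)`
and to nothing else, and every point is related to some point: one chooses the coordinates of a
partner at `x` or `y` so that the condition at each `α` holds or is vacuous. So on the compact
space `R` the swap `(z, w) ↦ (w, z)` carries the fibre of the first projection over `(x, s)` onto
the fibre over `(y, t)`.
-/

universe u

/-- Points `a`, `b` of a compact Hausdorff space `X` are pin equivalent if there exist a
compact Hausdorff space `Y`, a continuous surjection `f : Y → X`, and a homeomorphism
`g : Y → Y` with `g (f ⁻¹' {a}) = f ⁻¹' {b}`. -/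
def PinEquiv {X : Type u} [TopologicalSpace X] (a b : X) : Prop :=
  ∃ (Y : Type u) (_ : TopologicalSpace Y) (_ : CompactSpace Y) (_ : T2Space Y)
    (f : Y → X) (g : Y ≃ₜ Y),
    Continuous f ∧ Function.Surjective f ∧ (g : Y → Y) '' (f ⁻¹' {a}) = f ⁻¹' {b}

open Set Filter Topology

section PinEquiv

variable {Z : Type u} [TopologicalSpace Z] [CompactSpace Z] [T2Space Z]

theorem Homeomorph.pinEquiv (h : Z ≃ₜ Z) (z : Z) : PinEquiv z (h z) :=
  ⟨Z, _, ‹_›, ‹_›, id, h, continuous_id, Function.surjective_id, by simp⟩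

theorem pinEquiv_of_isClosed_of_symm {p q : Z} {R : Set (Z × Z)} (hR : IsClosed R)
    (hsymm : ∀ r ∈ R, r.swap ∈ R) (hdom : ∀ z, ∃ w, (z, w) ∈ R)
    (hpq : ∀ r ∈ R, r.1 = p ↔ r.2 = q) : PinEquiv p q := by
  have : CompactSpace R := isCompact_iff_compactSpace.mp hR.isCompact
  let g : R ≃ₜ R := (Homeomorph.prodComm Z Z).subtype fun r => ⟨hsymm r, hsymm r.swap⟩
  refine ⟨R, _, this, inferInstance, fun r => r.1.1, g, continuous_subtype_val.fst,
    fun z => let ⟨_, hw⟩ := hdom z; ⟨⟨_, hw⟩, rfl⟩, ?_⟩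
  rw [g.image_eq_preimage_symm]
  ext r
  exact hpq _ (hsymm _ r.2)

end PinEquiv

theorem exists_homeomorph_pi_apply_eq {ι : Type*} {E : ι → Type*} [∀ i, TopologicalSpace (E i)]
    [∀ i, DiscreteTopology (E i)] (s t : ∀ i, E i) :
    ∃ h : (∀ i, E i) ≃ₜ (∀ i, E i), h s = t := by
  classical
  exact ⟨.piCongrRight fun i => (Equiv.swap (s i) (t i)).toHomeomorphOfDiscrete,
    funext fun _ => Equiv.swap_apply_left _ _⟩

theorem Filter.HasBasis.exists_hasBasis_of_mk_le {X ι : Type u} [TopologicalSpace X] {x : X}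
    {B : Set (Set X)} (hB : (𝓝 x).HasBasis (· ∈ B) id) (hBι : Cardinal.mk B ≤ Cardinal.mk ι) :
    ∃ b : ι → Set X, (𝓝 x).HasBasis (fun _ => True) b := by
  obtain ⟨F⟩ := hBι
  have : Nonempty B := let ⟨U, hU⟩ := hB.ex_mem; ⟨⟨U, hU⟩⟩
  refine ⟨fun α => ((Function.invFun F α : B) : Set X),
    hasBasis_iff.2 fun V => hB.mem_iff.trans ?_⟩
  constructor
  · rintro ⟨U, hU, hUV⟩
    exact ⟨F ⟨U, hU⟩, trivial, by rwa [Function.leftInverse_invFun F.injective]⟩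
  · rintro ⟨α, -, hαV⟩
    exact ⟨_, (Function.invFun F α).2, hαV⟩

section NhdsBasis

variable {X ι : Type*} [TopologicalSpace X]

theorem Filter.HasBasis.iInter_closure_eq_singleton [T3Space X] {x : X} {b : ι → Set X}
    (hb : (𝓝 x).HasBasis (fun _ => True) b) : ⋂ α, closure (b α) = {x} := by
  simp [← ker_nhds x, hb.nhds_closure.ker]

theorem Filter.HasBasis.exists_isOpen_iInter_closure_eq_singleton [T3Space X] {x : X}
    {b : ι → Set X} (hb : (𝓝 x).HasBasis (fun _ => True) b) {W : Set X} (hW : W ∈ 𝓝 x) :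
    ∃ U : ι → Set X, (∀ α, IsOpen (U α) ∧ x ∈ U α ∧ U α ⊆ W) ∧ ⋂ α, closure (U α) = {x} := by
  have hx (α : ι) : x ∈ interior (W ∩ b α) :=
    mem_interior_iff_mem_nhds.2 (inter_mem hW (hb.mem_of_mem trivial))
  refine ⟨fun α => interior (W ∩ b α),
    fun α => ⟨isOpen_interior, hx α, interior_subset.trans inter_subset_left⟩, ?_⟩
  refine Subset.antisymm ?_ (singleton_subset_iff.2 (mem_iInter.2 fun α => subset_closure (hx α)))
  rw [← hb.iInter_closure_eq_singleton]
  exact iInter_mono fun α => closure_mono (interior_subset.trans inter_subset_right)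

end NhdsBasis

section PinRel

variable {X ι : Type*} [TopologicalSpace X]

def pinRel (U V : ι → Set X) (s t : ι → Bool) : Set ((X × (ι → Bool)) × (X × (ι → Bool))) :=
  {r | ∀ α, (r.1 ∈ U α ×ˢ {ε | ε α = s α} → r.2 ∈ closure (V α) ×ˢ {ε | ε α = t α}) ∧
    (r.1 ∈ V α ×ˢ {ε | ε α = t α} → r.2 ∈ closure (U α) ×ˢ {ε | ε α = s α})}

theorem pinRel_comm (U V : ι → Set X) (s t : ι → Bool) : pinRel U V s t = pinRel V U t s := by
  ext r
  exact forall_congr' fun _ => and_comm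

theorem isClosed_pinRel {U V : ι → Set X} (hU : ∀ α, IsOpen (U α)) (hV : ∀ α, IsOpen (V α))
    (s t : ι → Bool) : IsClosed (pinRel U V s t) := by
  have hcyl (α : ι) (a : Bool) : IsClopen {ε : ι → Bool | ε α = a} :=
    (isClopen_discrete {a}).preimage (continuous_apply (A := fun _ : ι => Bool) α)
  simp only [pinRel, ofPred_forall, ofPred_and]
  refine isClosed_iInter fun α => (isClosed_imp ?_ ?_).inter (isClosed_imp ?_ ?_)
  · exact ((hU α).prod (hcyl α (s α)).isOpen).preimage continuous_fst
  · exact (isClosed_closure.prod (hcyl α (t α)).isClosed).preimage continuous_snd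
  · exact ((hV α).prod (hcyl α (t α)).isOpen).preimage continuous_fst
  · exact (isClosed_closure.prod (hcyl α (s α)).isClosed).preimage continuous_snd

theorem eq_of_forall_mem_closure_prod {U : ι → Set X} {x : X} (hU : ⋂ α, closure (U α) = {x})
    {s : ι → Bool} {z : X × (ι → Bool)} (hz : ∀ α, z ∈ closure (U α) ×ˢ {ε | ε α = s α}) :
    z = (x, s) :=
  Prod.ext (by rw [← mem_singleton_iff, ← hU]; exact mem_iInter.2 fun α => (hz α).1)
    (funext fun α => (hz α).2)

theorem exists_pinRel_of_forall_notMem {U V : ι → Set X} {y : X} (hy : ∀ α, y ∈ V α ∧ y ∉ U α)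
    (s t : ι → Bool) {z : X × (ι → Bool)} (hz : ∀ α, z.1 ∉ V α) :
    ∃ w, (z, w) ∈ pinRel U V s t ∧ (w, z) ∈ pinRel U V s t := by
  classical
  refine ⟨(y, fun α => if z ∈ U α ×ˢ {ε | ε α = s α} then t α else !t α),
    fun α => ⟨fun hzU => ?_, fun hzV => absurd hzV.1 (hz α)⟩,
    fun α => ⟨fun hyU => absurd hyU.1 (hy α).2, fun hyV => ?_⟩⟩
  · exact ⟨subset_closure (hy α).1, if_pos hzU⟩
  · have hzU : z ∈ U α ×ˢ {ε | ε α = s α} := by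
      by_contra h
      exact Bool.not_ne_self (t α) ((if_neg h).symm.trans hyV.2)
    exact ⟨subset_closure hzU.1, hzU.2⟩

end PinRel

theorem pinEquiv_prod_of_disjoint_families {X : Type u} [TopologicalSpace X] [CompactSpace X]
    [T2Space X] {ι : Type u} {x y : X} (s t : ι → Bool) {U V : ι → Set X}
    (hUo : ∀ α, IsOpen (U α)) (hVo : ∀ α, IsOpen (V α)) (hxU : ∀ α, x ∈ U α)
    (hyV : ∀ α, y ∈ V α) (hUV : ∀ α β, Disjoint (U α) (V β))
    (hU : ⋂ α, closure (U α) = {x}) (hV : ⋂ α, closure (V α) = {y}) :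
    PinEquiv (x, s) (y, t) := by
  have hR := isClosed_pinRel hUo hVo s t
  refine pinEquiv_of_isClosed_of_symm (R := pinRel U V s t ∩ Prod.swap ⁻¹' pinRel U V s t)
    (hR.inter (hR.preimage continuous_swap)) (fun r hr => ⟨hr.2, hr.1⟩) (fun z => ?_)
    (fun r hr => ⟨fun h => ?_, fun h => ?_⟩)
  · by_cases hz : ∃ α, z.1 ∈ U α
    · obtain ⟨α, hα⟩ := hz
      exact exists_pinRel_of_forall_notMem
        (fun β => ⟨hyV β, (hUV β β).notMem_of_mem_right (hyV β)⟩) s t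
        (fun β => (hUV α β).notMem_of_mem_left hα)
    · rw [pinRel_comm]
      exact exists_pinRel_of_forall_notMem
        (fun β => ⟨hxU β, (hUV β β).notMem_of_mem_left (hxU β)⟩) t s (not_exists.1 hz)
  · exact eq_of_forall_mem_closure_prod hV fun α => (hr.1 α).1 (h ▸ ⟨hxU α, rfl⟩)
  · exact eq_of_forall_mem_closure_prod hU fun α =>
      (hr.2 α).2 (by rw [Prod.fst_swap, h]; exact ⟨hyV α, rfl⟩)

theorem pin_homogeneous_prod_cantor_general {X : Type u} [TopologicalSpace X] [CompactSpace X]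
    [T2Space X] (κ : Cardinal.{u})
    (ι : Type u) (hι : Cardinal.mk ι = κ)
    (hchar : ∀ x : X, ∃ B : Set (Set X), Cardinal.mk B ≤ κ ∧
      (∀ U ∈ B, U ∈ nhds x) ∧ ∀ V ∈ nhds x, ∃ U ∈ B, U ⊆ V) :
    ∀ p q : X × (ι → Bool), PinEquiv p q := by
  have hfamily (x : X) {W : Set X} (hW : W ∈ 𝓝 x) : ∃ U : ι → Set X,
      (∀ α, IsOpen (U α) ∧ x ∈ U α ∧ U α ⊆ W) ∧ ⋂ α, closure (U α) = {x} := by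
    obtain ⟨B, hBκ, hBmem, hBbase⟩ := hchar x
    have hB : (𝓝 x).HasBasis (· ∈ B) id :=
      hasBasis_iff.2 fun V => ⟨hBbase V, fun ⟨U, hU, hUV⟩ => mem_of_superset (hBmem U hU) hUV⟩
    obtain ⟨b, hb⟩ := hB.exists_hasBasis_of_mk_le (hι ▸ hBκ)
    exact hb.exists_isOpen_iInter_closure_eq_singleton hW
  rintro ⟨x, s⟩ ⟨y, t⟩
  rcases eq_or_ne x y with rfl | hxy
  · obtain ⟨h, hst⟩ := exists_homeomorph_pi_apply_eq s t
    simpa [hst] using ((Homeomorph.refl X).prodCongr h).pinEquiv (x, s)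
  · obtain ⟨Wx, Wy, hWx, hWy, hxW, hyW, hW⟩ := t2_separation hxy
    obtain ⟨U, hU, hUx⟩ := hfamily x (hWx.mem_nhds hxW)
    obtain ⟨V, hV, hVy⟩ := hfamily y (hWy.mem_nhds hyW)
    exact pinEquiv_prod_of_disjoint_families s t (fun α => (hU α).1) (fun α => (hV α).1)
      (fun α => (hU α).2.1) (fun α => (hV α).2.1)
      (fun α β => hW.mono (hU α).2.2 (hV β).2.2) hUx hVy

/-- If every point of a compact Hausdorff space `X` has character at most the infinite
cardinal `κ`, then `X × 2^κ` is pin homogeneous. Here `2^κ` is realized as `ι → Bool`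
for a type `ι` of cardinality `κ`, with the product topology (`Bool` discrete). -/
theorem pin_homogeneous_prod_cantor {X : Type u} [TopologicalSpace X] [CompactSpace X]
    [T2Space X] (κ : Cardinal.{u}) (hκ : Cardinal.aleph0 ≤ κ)
    (ι : Type u) (hι : Cardinal.mk ι = κ)
    (hchar : ∀ x : X, ∃ B : Set (Set X), Cardinal.mk B ≤ κ ∧
      (∀ U ∈ B, U ∈ nhds x) ∧ ∀ V ∈ nhds x, ∃ U ∈ B, U ⊆ V) :
    ∀ p q : X × (ι → Bool), PinEquiv p q :=
  pin_homogeneous_prod_cantor_general κ ι hι hchar
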